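/- Let c be a positive integer, let d₁ and d₂ be positive divisors of c, and let A, B, m be integers. Then Σ_{1≤b≤c, gcd(b,c)=1} e^{2πi A b̄^{(d₁)}/d₁} · e^{−2πi B b̄^{(d₂)}/d₂} · e^{2πi b m/c} = S((c/d₁)A − (c/d₂)B, m; c), where b̄^{(d)} denotes any integer inverse of b modulo d (each exponential factor is independent of the choice). -/

import Mathlib

/-- A canonical integer inverse of `b` modulo `d` (meaningful when `gcd(b,d)=1`). -/
noncomputable def intInvMod (d : ℕ) (b : ℤ) : ℤ := (((b : ZMod d)⁻¹ : ZMod d).val : ℤ)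

/-- The Kloosterman sum `S(u,h;c) = ∑_{1≤x≤c, gcd(x,c)=1} e^{2πi(ux̄+hx)/c}`. -/
noncomputable def kloostermanS (u h : ℤ) (c : ℕ) : ℂ :=
  ∑ x ∈ Finset.Icc 1 c,
    if Nat.gcd x c = 1 then
      Complex.exp (2 * Real.pi * Complex.I * ((u * intInvMod c x + h * x : ℤ) : ℂ) / c)
    else 0

/-!
A factor `e(a/d)` depends only on `a` modulo `d`, and for `d ∣ c` it equals `e((c/d)a/c)`.
For `b` coprime to `c`, an inverse of `b` modulo `c` is also one modulo every `d ∣ c`, so all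
three factors become `e(·/c)` of integers, and their product is the Kloosterman summand at `b`.
-/

open Complex

lemma intCast_intInvMod (d : ℕ) [NeZero d] (b : ℤ) :
    ((intInvMod d b : ℤ) : ZMod d) = (b : ZMod d)⁻¹ := by
  simp only [intInvMod, Int.cast_natCast, ZMod.natCast_zmod_val]

lemma intInvMod_modEq_of_dvd {c d : ℕ} (hc : c ≠ 0) (hdc : d ∣ c) {b : ℕ}
    (hb : b.Coprime c) : intInvMod d b ≡ intInvMod c b [ZMOD d] := by
  have : NeZero c := ⟨hc⟩
  have : NeZero d := ⟨ne_zero_of_dvd_ne_zero hc hdc⟩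
  rw [← ZMod.intCast_eq_intCast_iff, intCast_intInvMod]
  apply ZMod.inv_eq_of_mul_eq_one
  have hmul_c : ((b : ℤ) : ZMod c) * ((intInvMod c b : ℤ) : ZMod c) = 1 := by
    rw [intCast_intInvMod, Int.cast_natCast]
    exact ZMod.coe_mul_inv_eq_one b hb
  simpa only [map_mul, map_intCast, map_one] using congrArg (ZMod.castHom hdc (ZMod d)) hmul_c

lemma exp_two_pi_I_mul_intCast_div_eq_of_modEq {d : ℕ} {a a' : ℤ} (h : a ≡ a' [ZMOD d]) :
    exp (2 * Real.pi * I * (a : ℂ) / d) = exp (2 * Real.pi * I * (a' : ℂ) / d) := by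
  rcases eq_or_ne d 0 with rfl | hd
  · rw [show a = a' by simpa [Int.ModEq] using h]
  obtain ⟨k, hk⟩ := (Int.modEq_iff_dvd.mp h)
  have ha' : (a' : ℂ) = a + d * k := by
    rw [show a' = a + d * k by omega]; push_cast; ring
  rw [exp_eq_exp_iff_exists_int]
  exact ⟨-k, by rw [ha']; field_simp; push_cast; ring⟩

lemma exp_two_pi_I_mul_intCast_div_eq_of_dvd {c d : ℕ} (hc : c ≠ 0) (hdc : d ∣ c) (a : ℤ) :
    exp (2 * Real.pi * I * (a : ℂ) / d) =
      exp (2 * Real.pi * I * (((c / d : ℕ) : ℤ) * a : ℤ) / c) := by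
  obtain ⟨k, rfl⟩ := hdc
  have hd : d ≠ 0 := left_ne_zero_of_mul hc
  have hk : k ≠ 0 := right_ne_zero_of_mul hc
  rw [Nat.mul_div_cancel_left k (Nat.pos_of_ne_zero hd)]
  congr 1
  push_cast
  field_simp

lemma exp_two_pi_I_mul_intInvMod_div_eq {c d : ℕ} (hc : c ≠ 0) (hdc : d ∣ c) {b : ℕ}
    (hb : b.Coprime c) (A : ℤ) :
    exp (2 * Real.pi * I * ((A * intInvMod d b : ℤ) : ℂ) / d) =
      exp (2 * Real.pi * I * (((c / d : ℕ) : ℤ) * A * intInvMod c b : ℤ) / c) := by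
  rw [exp_two_pi_I_mul_intCast_div_eq_of_modEq ((intInvMod_modEq_of_dvd hc hdc hb).mul_left A),
    exp_two_pi_I_mul_intCast_div_eq_of_dvd hc hdc, mul_assoc ((c / d : ℕ) : ℤ)]

theorem complete_sum_to_kloosterman_general
    (c d₁ d₂ : ℕ)
    (hd₁ : d₁ ∣ c) (hd₂ : d₂ ∣ c) (A B m : ℤ) :
    (∑ b ∈ Finset.Icc 1 c,
        if Nat.gcd b c = 1 then
          Complex.exp (2 * Real.pi * Complex.I * ((A * intInvMod d₁ b : ℤ) : ℂ) / d₁) *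
            Complex.exp (-(2 * Real.pi * Complex.I * ((B * intInvMod d₂ b : ℤ) : ℂ) / d₂)) *
            Complex.exp (2 * Real.pi * Complex.I * ((b * m : ℤ) : ℂ) / c)
        else 0) =
      kloostermanS (((c / d₁ : ℕ) : ℤ) * A - ((c / d₂ : ℕ) : ℤ) * B) m c := by
  refine Finset.sum_congr rfl fun b hb_mem => ?_
  have hc : c ≠ 0 := by grind
  split_ifs with hb
  · rw [exp_neg, exp_two_pi_I_mul_intInvMod_div_eq hc hd₁ hb,
      exp_two_pi_I_mul_intInvMod_div_eq hc hd₂ hb, ← exp_neg, ← exp_add, ← exp_add]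
    congr 1
    push_cast
    ring
  · rfl

/-- Complete-sum identity producing a Kloosterman sum: for divisors `d₁, d₂` of `c`,
`∑_{1≤b≤c, gcd(b,c)=1} e^{2πiAb̄/d₁} e^{-2πiBb̄/d₂} e^{2πibm/c}
  = S((c/d₁)A - (c/d₂)B, m; c)`. -/
theorem complete_sum_to_kloosterman
    (c d₁ d₂ : ℕ) (hc : 0 < c) (hd₁pos : 0 < d₁) (hd₂pos : 0 < d₂)
    (hd₁ : d₁ ∣ c) (hd₂ : d₂ ∣ c) (A B m : ℤ) :
    (∑ b ∈ Finset.Icc 1 c,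
        if Nat.gcd b c = 1 then
          Complex.exp (2 * Real.pi * Complex.I * ((A * intInvMod d₁ b : ℤ) : ℂ) / d₁) *
            Complex.exp (-(2 * Real.pi * Complex.I * ((B * intInvMod d₂ b : ℤ) : ℂ) / d₂)) *
            Complex.exp (2 * Real.pi * Complex.I * ((b * m : ℤ) : ℂ) / c)
        else 0) =
      kloostermanS (((c / d₁ : ℕ) : ℤ) * A - ((c / d₂ : ℕ) : ℤ) * B) m c :=
  complete_sum_to_kloosterman_general c d₁ d₂ hd₁ hd₂ A B m
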